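/- With the composed scheme of Construction 2 (per-message commitments via COM sampled independently, deterministic vector commitment Commit_VC and deterministic Open_VC applied to the list of per-message commitments), for all n ≤ L, all I ⊆ {1,…,n}, all message vectors M_1, M_2 ∈ M^n with (M_1)_I = (M_2)_I, and every key k = (k_1, k_2), the selective-opening views satisfy the refined bound Δ(CD_k(M_1, I), CD_k(M_2, I)) ≤ Σ_{i ∈ {1,…,n} \ I} Δ(C_{k_1}((M_1)_i), C_{k_1}((M_2)_i)), where C_{k_1}(m) denotes the marginal distribution of the commitment component of Commit_COM(k_1, m), and CD_k(M, I) denotes the joint distribution of the vector commitment c together with the openings (c_i, d_i, Open_VC(k_2, D', i)) for all i ∈ I. -/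

import Mathlib

/-!
Statistical distance does not increase under post-processing (`PMF.map`, `PMF.bind`), and on
independent products it is subadditive: change one factor at a time and use the triangle
inequality. The view is a deterministic function of the list of pairs `(cᵢ, dᵢ)` which never
looks at `dᵢ` for `i ∉ I`, so these decommitments may be overwritten by a constant first.
After that, position `i ∉ I` contributes the distance of the commitment marginals, and an
opened position contributes nothing because `(M₁)ᵢ = (M₂)ᵢ`.
-/

/-- Statistical distance `Δ(p, q) = Σ_x |p(x) − q(x)|`. -/
noncomputable def statDist {α : Type} (p q : PMF α) : ℝ :=
  ∑' x, |(p x).toReal - (q x).toReal|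

/-- Independent product of a list of distributions. -/
noncomputable def pmfList {α : Type} : List (PMF α) → PMF (List α)
  | [] => PMF.pure []
  | p :: ps => p.bind fun x => (pmfList ps).map fun xs => x :: xs

/-- The selective-opening view `CD_k(M, I)` of the composed scheme: the joint
distribution of the vector commitment `c` together with the openings
`(cᵢ, dᵢ, Open_VC(k₂, D', i))` at all positions `i ∈ I`. -/
noncomputable def selectiveOpeningView
    {Msg C D CC DD O : Type} [Inhabited C] [Inhabited D]
    (comCommit : Msg → PMF (C × D))
    (vcCommit : List C → CC × DD) (vcOpen : DD → ℕ → O)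
    (M : List Msg) (I : Finset ℕ) :
    PMF (CC × (ℕ → Option ((C × D) × O))) :=
  (pmfList (M.map comCommit)).map fun cds =>
    ((vcCommit (cds.map Prod.fst)).1,
      fun i =>
        if i ∈ I then
          some (cds.getD (i - 1) default, vcOpen (vcCommit (cds.map Prod.fst)).2 i)
        else none)

open scoped ENNReal

section StatEDist

variable {α β : Type}

/-- `statDist` with values in `ℝ≥0∞`, where truncated subtraction gives
`|a - b| = (a - b) + (b - a)` and no summability side conditions arise. -/
noncomputable def statEDist (p q : PMF α) : ℝ≥0∞ :=
  ∑' x, ((p x - q x) + (q x - p x))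

theorem statEDist_self (p : PMF α) : statEDist p p = 0 := by
  simp [statEDist]

theorem statEDist_le_two (p q : PMF α) : statEDist p q ≤ 2 :=
  calc statEDist p q ≤ ∑' x, (p x + q x) :=
        ENNReal.tsum_le_tsum fun _ => add_le_add tsub_le_self tsub_le_self
    _ = 2 := by rw [ENNReal.tsum_add, p.tsum_coe, q.tsum_coe, one_add_one_eq_two]

theorem statEDist_ne_top (p q : PMF α) : statEDist p q ≠ ∞ :=
  ((statEDist_le_two p q).trans_lt ENNReal.ofNat_lt_top).ne

theorem statDist_eq_toReal_statEDist (p q : PMF α) :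
    statDist p q = (statEDist p q).toReal := by
  have hterm : ∀ x, (p x - q x) + (q x - p x) ≠ ∞ := fun x =>
    ENNReal.add_ne_top.2
      ⟨ENNReal.sub_ne_top (p.apply_ne_top x), ENNReal.sub_ne_top (q.apply_ne_top x)⟩
  rw [statEDist, ENNReal.tsum_toReal_eq hterm, statDist]
  refine tsum_congr fun x => ?_
  have hp := p.apply_ne_top x
  have hq := q.apply_ne_top x
  rcases le_total (p x) (q x) with h | h
  · rw [tsub_eq_zero_of_le h, zero_add, ENNReal.toReal_sub_of_le h hq, abs_sub_comm,
      abs_of_nonneg (sub_nonneg.2 (ENNReal.toReal_mono hq h))]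
  · rw [tsub_eq_zero_of_le h, add_zero, ENNReal.toReal_sub_of_le h hp,
      abs_of_nonneg (sub_nonneg.2 (ENNReal.toReal_mono hp h))]

theorem statEDist_triangle (p q r : PMF α) :
    statEDist p r ≤ statEDist p q + statEDist q r := by
  rw [statEDist, statEDist, statEDist, ← ENNReal.tsum_add]
  refine ENNReal.tsum_le_tsum fun x => ?_
  calc (p x - r x) + (r x - p x)
      ≤ ((p x - q x) + (q x - r x)) + ((r x - q x) + (q x - p x)) :=
        add_le_add tsub_le_tsub_add_tsub tsub_le_tsub_add_tsub
    _ = _ := by ring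

private theorem tsum_sub_tsum_le (f g : α → ℝ≥0∞) :
    (∑' a, f a) - ∑' a, g a ≤ ∑' a, (f a - g a) := by
  rw [tsub_le_iff_right, ← ENNReal.tsum_add]
  exact ENNReal.tsum_le_tsum fun _ => le_tsub_add

theorem statEDist_bind_le (p q : PMF α) (f : α → PMF β) :
    statEDist (p.bind f) (q.bind f) ≤ statEDist p q := by
  have hpt : ∀ y, ((p.bind f) y - (q.bind f) y) + ((q.bind f) y - (p.bind f) y)
      ≤ ∑' x, ((p x - q x) + (q x - p x)) * f x y := fun y => by
    simp only [PMF.bind_apply, add_mul, ENNReal.tsum_add,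
      ENNReal.sub_mul fun _ _ => PMF.apply_ne_top _ _]
    exact add_le_add (tsum_sub_tsum_le _ _) (tsum_sub_tsum_le _ _)
  calc statEDist (p.bind f) (q.bind f)
      ≤ ∑' y, ∑' x, ((p x - q x) + (q x - p x)) * f x y := ENNReal.tsum_le_tsum hpt
    _ = statEDist p q := by
        rw [ENNReal.tsum_comm, statEDist]
        simp only [ENNReal.tsum_mul_left, PMF.tsum_coe, mul_one]

theorem statEDist_map_le (p q : PMF α) (f : α → β) :
    statEDist (p.map f) (q.map f) ≤ statEDist p q := by
  simpa only [PMF.bind_pure_comp] using statEDist_bind_le p q (PMF.pure ∘ f)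

theorem statEDist_bind_bind_le (p : PMF α) (f g : α → PMF β) {c : ℝ≥0∞}
    (hfg : ∀ x, statEDist (f x) (g x) ≤ c) :
    statEDist (p.bind f) (p.bind g) ≤ c := by
  have hpt : ∀ y, ((p.bind f) y - (p.bind g) y) + ((p.bind g) y - (p.bind f) y)
      ≤ ∑' x, p x * ((f x y - g x y) + (g x y - f x y)) := fun y => by
    simp only [PMF.bind_apply, mul_add, ENNReal.tsum_add,
      ENNReal.mul_sub fun _ _ => PMF.apply_ne_top _ _]
    exact add_le_add (tsum_sub_tsum_le _ _) (tsum_sub_tsum_le _ _)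
  calc statEDist (p.bind f) (p.bind g)
      ≤ ∑' y, ∑' x, p x * ((f x y - g x y) + (g x y - f x y)) := ENNReal.tsum_le_tsum hpt
    _ = ∑' x, p x * statEDist (f x) (g x) := by
        rw [ENNReal.tsum_comm]
        simp only [ENNReal.tsum_mul_left, statEDist]
    _ ≤ ∑' x, p x * c := ENNReal.tsum_le_tsum fun x => mul_le_mul_right (hfg x) _
    _ = c := by rw [ENNReal.tsum_mul_right, PMF.tsum_coe, one_mul]

end StatEDist

section PmfList

variable {α β : Type}

theorem statEDist_pmfList_ofFn_le :
    ∀ {n : ℕ} (p q : Fin n → PMF α),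
      statEDist (pmfList (List.ofFn p)) (pmfList (List.ofFn q)) ≤ ∑ i, statEDist (p i) (q i)
  | 0, _, _ => by simp [pmfList, statEDist_self]
  | n + 1, p, q => by
    set r := pmfList (List.ofFn fun i => p i.succ)
    set s := pmfList (List.ofFn fun i => q i.succ)
    rw [List.ofFn_succ, List.ofFn_succ, pmfList, pmfList, Fin.sum_univ_succ]
    calc _ ≤ statEDist ((p 0).bind fun x => r.map (x :: ·)) ((q 0).bind fun x => r.map (x :: ·))
          + statEDist ((q 0).bind fun x => r.map (x :: ·)) ((q 0).bind fun x => s.map (x :: ·)) :=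
          statEDist_triangle _ _ _
      _ ≤ statEDist (p 0) (q 0) + statEDist r s :=
          add_le_add (statEDist_bind_le _ _ _)
            (statEDist_bind_bind_le _ _ _ fun x => statEDist_map_le r s _)
      _ ≤ _ := add_le_add le_rfl (statEDist_pmfList_ofFn_le _ _)

theorem pmfList_ofFn_map_mapIdx :
    ∀ {n : ℕ} (p : Fin n → PMF α) (f : ℕ → α → β),
      (pmfList (List.ofFn p)).map (List.mapIdx f)
        = pmfList (List.ofFn fun i => (p i).map (f i))
  | 0, _, _ => by simp [pmfList, PMF.pure_map]
  | n + 1, p, f => by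
    rw [List.ofFn_succ, List.ofFn_succ, pmfList, pmfList, PMF.map_bind, PMF.bind_map]
    simp only [Fin.val_succ, Fin.val_zero,
      ← pmfList_ofFn_map_mapIdx (fun i => p i.succ) (fun i => f (i + 1))]
    congr 1
    funext x
    simp [PMF.map_comp, Function.comp_def, List.mapIdx_cons]

end PmfList

theorem List.eq_ofFn_getD {α : Type} {l : List α} {n : ℕ} (hl : l.length = n) (d : α) :
    l = List.ofFn fun j : Fin n => l.getD j d := by
  subst hl
  refine List.ext_getElem (by simp) fun j _ _ => ?_
  simp

theorem Fin.sum_univ_eq_sum_Icc_sub_one {M : Type} [AddCommMonoid M] (n : ℕ) (g : ℕ → M) :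
    ∑ j : Fin n, g j = ∑ i ∈ Finset.Icc 1 n, g (i - 1) := by
  rw [Fin.sum_univ_eq_sum_range, Finset.range_eq_Ico, ← Finset.Ico_add_one_right_eq_Icc,
    ← Finset.sum_Ico_add' (fun i => g (i - 1)) 0 n 1]
  simp

section SelectiveOpening

variable {C D CC DD O : Type} [Inhabited D]

/-- List index `j` is position `j + 1`: list indices start at `0`, positions in `I` at `1`. -/
def hideUnopened (I : Finset ℕ) (j : ℕ) (cd : C × D) : C × D :=
  if j + 1 ∈ I then cd else (cd.1, default)

/-- The deterministic part of `selectiveOpeningView`, applied to the sampled `(cᵢ, dᵢ)`. -/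
def openingView [Inhabited C] (vcCommit : List C → CC × DD) (vcOpen : DD → ℕ → O)
    (I : Finset ℕ) (cds : List (C × D)) : CC × (ℕ → Option ((C × D) × O)) :=
  ((vcCommit (cds.map Prod.fst)).1,
    fun i =>
      if i ∈ I then
        some (cds.getD (i - 1) default, vcOpen (vcCommit (cds.map Prod.fst)).2 i)
      else none)

theorem map_fst_mapIdx_hideUnopened (I : Finset ℕ) (cds : List (C × D)) :
    (cds.mapIdx (hideUnopened I)).map Prod.fst = cds.map Prod.fst := by
  refine List.ext_getElem (by simp) fun j _ _ => ?_
  simp only [List.getElem_map, List.getElem_mapIdx, hideUnopened]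
  split_ifs <;> rfl

theorem hideUnopened_of_mem {I : Finset ℕ} {j : ℕ} (hj : j + 1 ∈ I) :
    hideUnopened (C := C) (D := D) I j = id := by
  funext cd
  simp [hideUnopened, hj]

theorem getD_mapIdx_hideUnopened [Inhabited C] {I : Finset ℕ} {j : ℕ} (hj : j + 1 ∈ I)
    (cds : List (C × D)) :
    (cds.mapIdx (hideUnopened I)).getD j default = cds.getD j default := by
  simp only [List.getD_eq_getElem?_getD, List.getElem?_mapIdx, hideUnopened_of_mem hj,
    Option.map_id, id]

theorem openingView_mapIdx_hideUnopened [Inhabited C] (vcCommit : List C → CC × DD)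
    (vcOpen : DD → ℕ → O) {I : Finset ℕ} (hI : 0 ∉ I) (cds : List (C × D)) :
    openingView vcCommit vcOpen I (cds.mapIdx (hideUnopened I))
      = openingView vcCommit vcOpen I cds := by
  simp only [openingView, map_fst_mapIdx_hideUnopened]
  congr 2
  funext i
  split_ifs with hi
  · have hi' : i - 1 + 1 ∈ I := by
      rwa [Nat.sub_add_cancel (Nat.pos_of_ne_zero fun h => hI (h ▸ hi))]
    rw [getD_mapIdx_hideUnopened hi']
  · rfl

theorem statEDist_map_hideUnopened_le {I : Finset ℕ} {j : ℕ} (hj : j + 1 ∉ I)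
    (p q : PMF (C × D)) :
    statEDist (p.map (hideUnopened I j)) (q.map (hideUnopened I j))
      ≤ statEDist (p.map Prod.fst) (q.map Prod.fst) := by
  have hhide : hideUnopened I j = (fun c : C => (c, (default : D))) ∘ Prod.fst := by
    funext cd
    simp [hideUnopened, hj]
  rw [hhide, ← PMF.map_comp, ← PMF.map_comp]
  exact statEDist_map_le _ _ _

theorem selectiveOpeningView_eq_map_pmfList_hideUnopened {Msg : Type} [Inhabited Msg]
    [Inhabited C] (com : Msg → PMF (C × D)) (vcCommit : List C → CC × DD)
    (vcOpen : DD → ℕ → O) {I : Finset ℕ} (hI : 0 ∉ I) {n : ℕ} {M : List Msg}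
    (hM : M.length = n) :
    selectiveOpeningView com vcCommit vcOpen M I
      = (pmfList (List.ofFn fun j : Fin n => (com (M.getD j default)).map (hideUnopened I j))).map
          (openingView vcCommit vcOpen I) := by
  have hcom : M.map com = List.ofFn fun j : Fin n => com (M.getD j default) := by
    rw [List.eq_ofFn_getD (l := M.map com) (by rw [List.length_map, hM]) (com default)]
    simp only [List.getD_map]
  rw [← pmfList_ofFn_map_mapIdx, PMF.map_comp, ← hcom]
  simp only [Function.comp_def, openingView_mapIdx_hideUnopened vcCommit vcOpen hI]
  rfl

theorem statEDist_selectiveOpeningView_le {Msg : Type} [Inhabited Msg] [Inhabited C]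
    (com : Msg → PMF (C × D)) (vcCommit : List C → CC × DD) (vcOpen : DD → ℕ → O)
    {I : Finset ℕ} (hI : 0 ∉ I) {n : ℕ} {M₁ M₂ : List Msg}
    (hM₁ : M₁.length = n) (hM₂ : M₂.length = n)
    (hMI : ∀ i ∈ I, M₁.getD (i - 1) default = M₂.getD (i - 1) default) :
    statEDist (selectiveOpeningView com vcCommit vcOpen M₁ I)
        (selectiveOpeningView com vcCommit vcOpen M₂ I)
      ≤ ∑ i ∈ Finset.Icc 1 n \ I,
          statEDist ((com (M₁.getD (i - 1) default)).map Prod.fst)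
            ((com (M₂.getD (i - 1) default)).map Prod.fst) := by
  set hybrid : ℕ → ℝ≥0∞ := fun j =>
    statEDist ((com (M₁.getD j default)).map (hideUnopened I j))
      ((com (M₂.getD j default)).map (hideUnopened I j))
  have hopened : ∀ i ∈ I, hybrid (i - 1) = 0 := fun i hi => by
    simp only [hybrid, hMI i hi, statEDist_self]
  calc _ ≤ ∑ j : Fin n, hybrid j := by
        rw [selectiveOpeningView_eq_map_pmfList_hideUnopened com vcCommit vcOpen hI hM₁,
          selectiveOpeningView_eq_map_pmfList_hideUnopened com vcCommit vcOpen hI hM₂]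
        exact (statEDist_map_le _ _ _).trans (statEDist_pmfList_ofFn_le _ _)
    _ = ∑ i ∈ Finset.Icc 1 n, hybrid (i - 1) := Fin.sum_univ_eq_sum_Icc_sub_one n hybrid
    _ ≤ ∑ i ∈ Finset.Icc 1 n \ I, hybrid (i - 1) :=
        Finset.sum_le_sum_of_ne_zero fun i hi hne =>
          Finset.mem_sdiff.2 ⟨hi, fun hiI => hne (hopened i hiI)⟩
    _ ≤ _ := Finset.sum_le_sum fun i hi => by
        obtain ⟨hiIcc, hiI⟩ := Finset.mem_sdiff.1 hi
        refine statEDist_map_hideUnopened_le ?_ _ _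
        rwa [Nat.sub_add_cancel (Finset.mem_Icc.1 hiIcc).1]

end SelectiveOpening

theorem selective_opening_hybrid_decomposition_general
    {K₁ K₂ Msg C D CC DD O : Type} [Inhabited Msg] [Inhabited C] [Inhabited D]
    (comCommit : K₁ → Msg → PMF (C × D))
    (vcCommit : K₂ → List C → CC × DD) (vcOpen : K₂ → DD → ℕ → O)
    (n : ℕ) (I : Finset ℕ) (hI : I ⊆ Finset.Icc 1 n)
    (M₁ M₂ : List Msg) (hM₁ : M₁.length = n) (hM₂ : M₂.length = n)
    (hMI : ∀ i ∈ I, M₁.getD (i - 1) default = M₂.getD (i - 1) default)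
    (k₁ : K₁) (k₂ : K₂) :
    statDist
      (selectiveOpeningView (comCommit k₁) (vcCommit k₂) (vcOpen k₂) M₁ I)
      (selectiveOpeningView (comCommit k₁) (vcCommit k₂) (vcOpen k₂) M₂ I)
    ≤ ∑ i ∈ Finset.Icc 1 n \ I,
        statDist ((comCommit k₁ (M₁.getD (i - 1) default)).map Prod.fst)
          ((comCommit k₁ (M₂.getD (i - 1) default)).map Prod.fst) := by
  have h0 : 0 ∉ I := fun h => by simpa using hI h
  simp only [statDist_eq_toReal_statEDist]
  rw [← ENNReal.toReal_sum fun _ _ => statEDist_ne_top _ _]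
  exact ENNReal.toReal_mono (ENNReal.sum_ne_top.2 fun _ _ => statEDist_ne_top _ _)
    (statEDist_selectiveOpeningView_le _ _ _ h0 hM₁ hM₂ hMI)

/-- **Hybrid decomposition (proof of Theorem 4).**
For all `n ≤ L`, all `I ⊆ {1, …, n}`, all message vectors `M₁, M₂` of length
`n` with `(M₁)_I = (M₂)_I`, and every key `k = (k₁, k₂)`, the selective-opening
views satisfy the refined bound
`Δ(CD_k(M₁, I), CD_k(M₂, I)) ≤ Σ_{i ∈ {1,…,n} \ I} Δ(C_{k₁}((M₁)ᵢ), C_{k₁}((M₂)ᵢ))`. -/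
theorem selective_opening_hybrid_decomposition
    {K₁ K₂ Msg C D CC DD O : Type} [Inhabited Msg] [Inhabited C] [Inhabited D]
    (comCommit : K₁ → Msg → PMF (C × D))
    (L : ℕ) (vcCommit : K₂ → List C → CC × DD) (vcOpen : K₂ → DD → ℕ → O)
    (n : ℕ) (hn : n ≤ L) (I : Finset ℕ) (hI : I ⊆ Finset.Icc 1 n)
    (M₁ M₂ : List Msg) (hM₁ : M₁.length = n) (hM₂ : M₂.length = n)
    (hMI : ∀ i ∈ I, M₁.getD (i - 1) default = M₂.getD (i - 1) default)
    (k₁ : K₁) (k₂ : K₂) :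
    statDist
      (selectiveOpeningView (comCommit k₁) (vcCommit k₂) (vcOpen k₂) M₁ I)
      (selectiveOpeningView (comCommit k₁) (vcCommit k₂) (vcOpen k₂) M₂ I)
    ≤ ∑ i ∈ Finset.Icc 1 n \ I,
        statDist ((comCommit k₁ (M₁.getD (i - 1) default)).map Prod.fst)
          ((comCommit k₁ (M₂.getD (i - 1) default)).map Prod.fst) :=
  selective_opening_hybrid_decomposition_general comCommit vcCommit vcOpen n I hI M₁ M₂ hM₁ hM₂ hMI
    k₁ k₂
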